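/- For every complex number ζ with (Re ζ)² ≥ (Im ζ)², one has |P(ζ)| ≥ 1; in particular P(ζ) ≠ 0 on this region. -/

import Mathlib

/-!
Each factor `1 + ζ²/μ_p²` has real part `1 + (Re² ζ - Im² ζ)/μ_p² ≥ 1`, hence modulus at least `1`,
and a product of factors of modulus at least `1` has modulus at least `1`.
-/

theorem one_le_norm_tprod {ι E : Type*} [SeminormedCommRing E] [NormMulClass E] [NormOneClass E]
    {f : ι → E} (hf : ∀ i, 1 ≤ ‖f i‖) : 1 ≤ ‖∏' i, f i‖ := by
  by_cases hmul : Multipliable f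
  · exact ge_of_tendsto' hmul.hasProd.norm fun s => Finset.one_le_prod fun i _ => hf i
  · rw [tprod_eq_one_of_not_multipliable hmul, norm_one]

namespace Complex

theorem one_le_norm_one_add {w : ℂ} (hw : 0 ≤ w.re) : 1 ≤ ‖1 + w‖ :=
  calc (1 : ℝ) ≤ (1 + w).re := by simpa using hw
    _ ≤ ‖1 + w‖ := re_le_norm _

theorem re_sq_nonneg {z : ℂ} (hz : z.im ^ 2 ≤ z.re ^ 2) : 0 ≤ (z ^ 2).re := by
  simpa [sq] using hz

theorem re_div_ofReal_sq_nonneg {z : ℂ} (hz : 0 ≤ z.re) (r : ℝ) : 0 ≤ (z / (r : ℂ) ^ 2).re := by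
  rw [← ofReal_pow, div_ofReal_re]
  positivity

end Complex

theorem one_le_abs_canonical_product_general (μ : ℕ → ℝ)
    (ζ : ℂ) (hζ : ζ.im ^ 2 ≤ ζ.re ^ 2) :
    1 ≤ ‖(∏' p : ℕ, (1 + ζ ^ 2 / (μ p : ℂ) ^ 2))‖ ∧
    (∏' p : ℕ, (1 + ζ ^ 2 / (μ p : ℂ) ^ 2)) ≠ 0 := by
  have hnorm : 1 ≤ ‖∏' p : ℕ, (1 + ζ ^ 2 / (μ p : ℂ) ^ 2)‖ :=
    one_le_norm_tprod fun p =>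
      Complex.one_le_norm_one_add (Complex.re_div_ofReal_sq_nonneg (Complex.re_sq_nonneg hζ) _)
  exact ⟨hnorm, norm_pos_iff.mp (one_pos.trans_le hnorm)⟩

/-- Let `(μ_p)` be a sequence of positive reals with `∑ 1/μ_p² < ∞` and
`P(ζ) = ∏_{p} (1 + ζ²/μ_p²)`. For every `ζ ∈ ℂ` with `(Re ζ)² ≥ (Im ζ)²` one has
`|P(ζ)| ≥ 1`; in particular `P(ζ) ≠ 0` on this region. -/
theorem one_le_abs_canonical_product (μ : ℕ → ℝ) (hμpos : ∀ p, 0 < μ p)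
    (hμsum : Summable fun p => 1 / (μ p) ^ 2)
    (ζ : ℂ) (hζ : ζ.im ^ 2 ≤ ζ.re ^ 2) :
    1 ≤ ‖(∏' p : ℕ, (1 + ζ ^ 2 / (μ p : ℂ) ^ 2))‖ ∧
    (∏' p : ℕ, (1 + ζ ^ 2 / (μ p : ℂ) ^ 2)) ≠ 0 :=
  one_le_abs_canonical_product_general μ ζ hζ
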